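/- arXiv:1502.03416 — 2 statements merged into one kernel-verified Lean document; each statement's English description precedes it below -/
import Mathlib

section
/- For every γ ∈ Θ = [0,∞)^p and every index i ∈ {1,…,p}, one has ℓ(γ) ≤ −(n/2) log σ² − ½ log(1 + γ_i ‖x_i‖²/σ²). In particular, if x_i ≠ 0 then ℓ(γ) → −∞ as γ_i → ∞ uniformly over the other coordinates. -/
/-!
Split `C_γ = (σ² I + γ_i x_i x_iᵀ) + ∑_{j ≠ i} γ_j x_j x_jᵀ`. By the matrix determinant lemma,
adding a rank-one term `c v vᵀ` (`c ≥ 0`) to a positive definite `A` multiplies its determinant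
by `1 + c vᵀ A⁻¹ v ≥ 1`. Hence `det C_γ ≥ det (σ² I + γ_i x_i x_iᵀ) = σ²ⁿ (1 + γ_i ‖x_i‖² / σ²)`,
and the quadratic term `yᵀ C_γ⁻¹ y` is nonnegative, which gives the bound. The right-hand side
depends on `γ` only through `γ_i` and tends to `-∞` when `x_i ≠ 0`.
-/

open Matrix Filter

namespace Matrix

variable {m : Type*} [Fintype m]

theorem posSemidef_smul_vecMulVec_self {c : ℝ} (hc : 0 ≤ c) (v : m → ℝ) :
    (c • vecMulVec v v).PosSemidef := by
  simpa using (posSemidef_vecMulVec_self_star v).smul hc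

variable [DecidableEq m]

theorem det_add_vecMulVec {R : Type*} [CommRing R] {A : Matrix m m R} (hA : IsUnit A.det)
    (u v : m → R) : (A + vecMulVec u v).det = A.det * (1 + v ⬝ᵥ A⁻¹ *ᵥ u) := by
  have hfactor : A + vecMulVec u v = A * (1 + vecMulVec (A⁻¹ *ᵥ u) v) := by
    rw [Matrix.mul_add, Matrix.mul_one, mul_vecMulVec, mulVec_mulVec, mul_nonsing_inv A hA,
      one_mulVec]
  rw [hfactor, det_mul, vecMulVec_eq Unit, det_one_add_replicateCol_mul_replicateRow]

theorem PosDef.det_le_det_add_smul_vecMulVec {A : Matrix m m ℝ} (hA : A.PosDef) {c : ℝ}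
    (hc : 0 ≤ c) (v : m → ℝ) : A.det ≤ (A + c • vecMulVec v v).det := by
  have hq : 0 ≤ v ⬝ᵥ A⁻¹ *ᵥ v := by
    simpa using hA.inv.posSemidef.dotProduct_mulVec_nonneg v
  rw [← smul_vecMulVec, det_add_vecMulVec hA.det_pos.ne'.isUnit, mulVec_smul, dotProduct_smul,
    smul_eq_mul]
  nlinarith [hA.det_pos, mul_nonneg hc hq]

theorem PosDef.det_le_det_add_sum_smul_vecMulVec {ι : Type*} {A : Matrix m m ℝ} (hA : A.PosDef)
    (s : Finset ι) {c : ι → ℝ} (hc : ∀ j ∈ s, 0 ≤ c j) (v : ι → m → ℝ) :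
    A.det ≤ (A + ∑ j ∈ s, c j • vecMulVec (v j) (v j)).det := by
  classical
  induction s using Finset.induction_on with
  | empty => simp
  | insert a s ha ih =>
    have hS : (A + ∑ j ∈ s, c j • vecMulVec (v j) (v j)).PosDef :=
      hA.add_posSemidef <| posSemidef_sum s fun j hj =>
        posSemidef_smul_vecMulVec_self (hc j (Finset.mem_insert_of_mem hj)) (v j)
    rw [Finset.sum_insert ha, ← add_assoc, add_right_comm]
    exact (ih fun j hj => hc j (Finset.mem_insert_of_mem hj)).trans <|
      hS.det_le_det_add_smul_vecMulVec (hc a (Finset.mem_insert_self a s)) (v a)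

theorem det_smul_one_add_smul_vecMulVec {σ : ℝ} (hσ : σ ≠ 0) (c : ℝ) (v : m → ℝ) :
    (σ • (1 : Matrix m m ℝ) + c • vecMulVec v v).det =
      σ ^ Fintype.card m * (1 + c * (v ⬝ᵥ v) / σ) := by
  have hdet : (σ • (1 : Matrix m m ℝ)).det = σ ^ Fintype.card m := by simp
  have hinv : (σ • (1 : Matrix m m ℝ))⁻¹ = σ⁻¹ • 1 :=
    inv_eq_left_inv (by rw [smul_mul_smul_comm, inv_mul_cancel₀ hσ, Matrix.one_mul, one_smul])
  rw [← smul_vecMulVec, det_add_vecMulVec (by simp [hdet, hσ]), hdet, hinv, smul_mulVec,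
    one_mulVec, dotProduct_smul, dotProduct_smul, smul_eq_mul, smul_eq_mul]
  field_simp

theorem log_det_smul_one_add_sum_smul_vecMulVec_ge {ι : Type*} [Fintype ι] [DecidableEq ι]
    {σ : ℝ} (hσ : 0 < σ) {γ : ι → ℝ} (hγ : ∀ j, 0 ≤ γ j) (x : ι → m → ℝ) (i : ι) :
    Fintype.card m * Real.log σ + Real.log (1 + γ i * (x i ⬝ᵥ x i) / σ) ≤
      Real.log (σ • (1 : Matrix m m ℝ) + ∑ j, γ j • vecMulVec (x j) (x j)).det := by
  set A := σ • (1 : Matrix m m ℝ) + γ i • vecMulVec (x i) (x i)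
  have hA : A.PosDef :=
    (PosDef.one.smul hσ).add_posSemidef (posSemidef_smul_vecMulVec_self (hγ i) (x i))
  have hsplit : σ • (1 : Matrix m m ℝ) + ∑ j, γ j • vecMulVec (x j) (x j) =
      A + ∑ j ∈ Finset.univ.erase i, γ j • vecMulVec (x j) (x j) := by
    rw [← Finset.add_sum_erase _ _ (Finset.mem_univ i), add_assoc]
  have hq : 0 < 1 + γ i * (x i ⬝ᵥ x i) / σ := by
    have hxx : 0 ≤ x i ⬝ᵥ x i := by simpa using dotProduct_self_star_nonneg (x i)
    linarith [div_nonneg (mul_nonneg (hγ i) hxx) hσ.le]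
  rw [← Real.log_pow, ← Real.log_mul (by positivity) hq.ne',
    ← det_smul_one_add_smul_vecMulVec hσ.ne', hsplit]
  exact Real.log_le_log hA.det_pos <|
    hA.det_le_det_add_sum_smul_vecMulVec _ (fun j _ => hγ j) x

end Matrix

theorem tendsto_log_one_add_mul_div_atTop {c σ : ℝ} (hc : 0 < c) (hσ : 0 < σ) :
    Tendsto (fun t : ℝ => Real.log (1 + t * c / σ)) atTop atTop :=
  Real.tendsto_log_atTop.comp <| tendsto_atTop_add_const_left _ 1 <|
    (tendsto_id.atTop_mul_const hc).atTop_div_const hσ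

/-- Upper bound on the sparse Bayesian learning marginal log-likelihood:
for every `γ ∈ Θ = [0,∞)^p` and every `i`,
`ℓ(γ) ≤ -(n/2) log σ² - ½ log(1 + γ_i ‖x_i‖²/σ²)`.
In particular, if `x_i ≠ 0` then `ℓ(γ) → -∞` as `γ_i → ∞`, uniformly over the
other coordinates. -/
theorem sbl_loglik_upper_bound (n p : ℕ) (y : Fin n → ℝ)
    (x : Fin p → Fin n → ℝ)
    (σ2 : ℝ) (hσ : 0 < σ2)
    (C : (Fin p → ℝ) → Matrix (Fin n) (Fin n) ℝ)
    (hC : ∀ γ, C γ = σ2 • (1 : Matrix (Fin n) (Fin n) ℝ) +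
      ∑ j : Fin p, γ j • vecMulVec (x j) (x j))
    (L : (Fin p → ℝ) → ℝ)
    (hL : ∀ γ, L γ = -(1/2) * Real.log (C γ).det - (1/2) * (y ⬝ᵥ (C γ)⁻¹.mulVec y)) :
    (∀ γ : Fin p → ℝ, (∀ j, 0 ≤ γ j) → ∀ i : Fin p,
      L γ ≤ -((n : ℝ)/2) * Real.log σ2 - (1/2) * Real.log (1 + γ i * (x i ⬝ᵥ x i) / σ2)) ∧
    (∀ i : Fin p, x i ≠ 0 → ∀ M : ℝ, ∃ T : ℝ, ∀ γ : Fin p → ℝ,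
      (∀ j, 0 ≤ γ j) → T ≤ γ i → L γ ≤ M) := by
  have hbound : ∀ γ : Fin p → ℝ, (∀ j, 0 ≤ γ j) → ∀ i : Fin p,
      L γ ≤ -((n : ℝ)/2) * Real.log σ2 - (1/2) * Real.log (1 + γ i * (x i ⬝ᵥ x i) / σ2) := by
    intro γ hγ i
    have hCpd : (C γ).PosDef := hC γ ▸ (PosDef.one.smul hσ).add_posSemidef
      (posSemidef_sum _ fun j _ => posSemidef_smul_vecMulVec_self (hγ j) (x j))
    have hlogdet := log_det_smul_one_add_sum_smul_vecMulVec_ge hσ hγ x i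
    rw [← hC γ, Fintype.card_fin] at hlogdet
    have hquad : 0 ≤ y ⬝ᵥ (C γ)⁻¹ *ᵥ y := by
      simpa using hCpd.inv.posSemidef.dotProduct_mulVec_nonneg y
    rw [hL γ]
    linarith
  refine ⟨hbound, fun i hxi M => ?_⟩
  have hxx : 0 < x i ⬝ᵥ x i := by simpa using dotProduct_self_star_pos_iff.2 hxi
  have hlim := tendsto_atBot_add_const_left _ (-((n : ℝ)/2) * Real.log σ2) <|
    (tendsto_log_one_add_mul_div_atTop hxx hσ).const_mul_atTop_of_neg (by norm_num : -(1/2 : ℝ) < 0)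
  obtain ⟨T, hT⟩ := eventually_atTop.1 (hlim.eventually_le_atBot M)
  refine ⟨T, fun γ hγ hTγ => (hbound γ hγ i).trans ?_⟩
  linarith [hT (γ i) hTγ]
end

section
/- Fix j ∈ {1,…,p} and γ ∈ Θ = [0,∞)^p, and set C_j := σ²·Iₙ + Σ_{k≠j} γ_k x_k x_kᵀ (positive definite). Then ℓ(γ) = −½ log det(C_j + γ_j x_j x_jᵀ) + ½ · γ_j (x_jᵀ C_j⁻¹ y)² / (1 + γ_j x_jᵀ C_j⁻¹ x_j) − ½ yᵀ C_j⁻¹ y. -/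
/-!
Splitting off the `j`-th term, `C γ = C_j + γ_j x_j x_jᵀ` is a rank-one update of the positive
definite matrix `C_j`, so the log-determinant term is unchanged and the Sherman–Morrison formula
`(A + c u uᵀ)⁻¹ = A⁻¹ - c/(1 + c uᵀA⁻¹u) · A⁻¹u uᵀA⁻¹` splits the quadratic form `yᵀ C γ⁻¹ y`.
Positive definiteness of `C_j` makes the denominator `1 + γ_j x_jᵀC_j⁻¹x_j` at least `1`.
-/

open Matrix

namespace Matrix

variable {m K : Type*} [Fintype m] [DecidableEq m] [Field K]

theorem inv_add_smul_vecMulVec {A : Matrix m m K} (hA : IsUnit A.det) {c : K} {u v : m → K}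
    (hd : 1 + c * (v ⬝ᵥ A⁻¹ *ᵥ u) ≠ 0) :
    (A + c • vecMulVec u v)⁻¹ =
      A⁻¹ - (c / (1 + c * (v ⬝ᵥ A⁻¹ *ᵥ u))) • vecMulVec (A⁻¹ *ᵥ u) (v ᵥ* A⁻¹) := by
  refine inv_eq_right_inv ?_
  have hAu : A * vecMulVec (A⁻¹ *ᵥ u) (v ᵥ* A⁻¹) = vecMulVec u (v ᵥ* A⁻¹) := by
    rw [mul_vecMulVec, mulVec_mulVec, mul_nonsing_inv A hA, one_mulVec]
  simp only [mul_sub, add_mul, Matrix.mul_smul, Matrix.smul_mul, mul_nonsing_inv A hA, hAu,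
    vecMulVec_smul, vecMulVec_mul, vecMul_vecMulVec]
  match_scalars
  · ring
  · field_simp
    ring

theorem dotProduct_inv_add_smul_vecMulVec_mulVec {A : Matrix m m K} (hA : IsUnit A.det)
    {c : K} {u v : m → K} (hd : 1 + c * (v ⬝ᵥ A⁻¹ *ᵥ u) ≠ 0) (w z : m → K) :
    w ⬝ᵥ (A + c • vecMulVec u v)⁻¹ *ᵥ z =
      w ⬝ᵥ A⁻¹ *ᵥ z - c * (w ⬝ᵥ A⁻¹ *ᵥ u) * (v ⬝ᵥ A⁻¹ *ᵥ z) / (1 + c * (v ⬝ᵥ A⁻¹ *ᵥ u)) := by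
  rw [inv_add_smul_vecMulVec hA hd, sub_mulVec, smul_mulVec, vecMulVec_mulVec, dotProduct_sub,
    dotProduct_smul, dotProduct_smul, ← dotProduct_mulVec]
  simp only [MulOpposite.smul_eq_mul_unop, MulOpposite.unop_op, smul_eq_mul]
  field_simp

theorem IsSymm.dotProduct_inv_add_smul_vecMulVec_self_mulVec_self {A : Matrix m m K}
    (hA : IsUnit A.det) (hAs : A.IsSymm) {c : K} {u : m → K}
    (hd : 1 + c * (u ⬝ᵥ A⁻¹ *ᵥ u) ≠ 0) (w : m → K) :
    w ⬝ᵥ (A + c • vecMulVec u u)⁻¹ *ᵥ w =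
      w ⬝ᵥ A⁻¹ *ᵥ w - c * (u ⬝ᵥ A⁻¹ *ᵥ w) ^ 2 / (1 + c * (u ⬝ᵥ A⁻¹ *ᵥ u)) := by
  have hsymm : w ⬝ᵥ A⁻¹ *ᵥ u = u ⬝ᵥ A⁻¹ *ᵥ w := by
    rw [dotProduct_mulVec, dotProduct_comm, ← mulVec_transpose, hAs.inv.eq]
  rw [dotProduct_inv_add_smul_vecMulVec_mulVec hA hd, hsymm, sq, mul_assoc c]

theorem posDef_smul_one_add_sum_smul_vecMulVec {ι : Type*} {σ : ℝ} (hσ : 0 < σ) (s : Finset ι)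
    {γ : ι → ℝ} (hγ : ∀ k ∈ s, 0 ≤ γ k) (x : ι → m → ℝ) :
    (σ • (1 : Matrix m m ℝ) + ∑ k ∈ s, γ k • vecMulVec (x k) (x k)).PosDef :=
  (PosDef.one.smul hσ).add_posSemidef <| posSemidef_sum s fun k hk =>
    (posSemidef_vecMulVec_self_star (x k)).smul (hγ k hk)

end Matrix

/-- Decomposition of the sparse Bayesian learning marginal log-likelihood in its `j`-th
coordinate: with `C_j = σ² Iₙ + Σ_{k≠j} γ_k x_k x_kᵀ`,
`ℓ(γ) = -½ log det(C_j + γ_j x_j x_jᵀ) + ½ γ_j (x_jᵀC_j⁻¹y)²/(1 + γ_j x_jᵀC_j⁻¹x_j)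
  - ½ yᵀC_j⁻¹y`. -/
theorem sbl_loglik_coordinate_decomposition (n p : ℕ) (y : Fin n → ℝ)
    (x : Fin p → Fin n → ℝ)
    (σ2 : ℝ) (hσ : 0 < σ2)
    (C : (Fin p → ℝ) → Matrix (Fin n) (Fin n) ℝ)
    (hC : ∀ γ, C γ = σ2 • (1 : Matrix (Fin n) (Fin n) ℝ) +
      ∑ j : Fin p, γ j • vecMulVec (x j) (x j))
    (L : (Fin p → ℝ) → ℝ)
    (hL : ∀ γ, L γ = -(1/2) * Real.log (C γ).det - (1/2) * (y ⬝ᵥ (C γ)⁻¹.mulVec y))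
    (j : Fin p) (γ : Fin p → ℝ) (hγ : ∀ k, 0 ≤ γ k)
    (Cj : Matrix (Fin n) (Fin n) ℝ)
    (hCj : Cj = σ2 • (1 : Matrix (Fin n) (Fin n) ℝ) +
      ∑ k ∈ Finset.univ.erase j, γ k • vecMulVec (x k) (x k)) :
    L γ = -(1/2) * Real.log (Cj + γ j • vecMulVec (x j) (x j)).det
      + (1/2) * (γ j * (x j ⬝ᵥ Cj⁻¹.mulVec y)^2 / (1 + γ j * (x j ⬝ᵥ Cj⁻¹.mulVec (x j))))
      - (1/2) * (y ⬝ᵥ Cj⁻¹.mulVec y) := by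
  have hsplit : C γ = Cj + γ j • vecMulVec (x j) (x j) := by
    rw [hC, hCj, ← Finset.sum_erase_add _ _ (Finset.mem_univ j), add_assoc]
  have hpd : Cj.PosDef :=
    hCj ▸ posDef_smul_one_add_sum_smul_vecMulVec hσ _ (fun k _ => hγ k) x
  have hden : 1 + γ j * (x j ⬝ᵥ Cj⁻¹ *ᵥ x j) ≠ 0 := by
    have hnonneg : 0 ≤ x j ⬝ᵥ Cj⁻¹ *ᵥ x j := by
      simpa using hpd.inv.posSemidef.dotProduct_mulVec_nonneg (x j)
    exact (add_pos_of_pos_of_nonneg one_pos (mul_nonneg (hγ j) hnonneg)).ne'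
  have hsymm : Cj.IsSymm := isHermitian_iff_isSymm.mp hpd.isHermitian
  rw [hL, hsplit,
    hsymm.dotProduct_inv_add_smul_vecMulVec_self_mulVec_self hpd.det_pos.ne'.isUnit hden y]
  ring
end
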